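/- Let λ be a Mealy QHMM whose sub-TOM entries are all trace-monotonicity preserving quantum operations. Fix an emission sequence O = (o_1,...,o_T). For a state sequence w = (n_0,...,n_k) ending at state S_i, define B_w = P^{o_k}_{n_k,n_{k-1}} ∘ ··· ∘ P^{o_1}_{n_1,n_0}(π_{n_0}), and let A_{k,S_i} be a B_w maximizing tr(B_w) over sequences w of length k ending in S_i. Then tr(A_{k,S_i}) = max over previous states n_{k-1} of tr(P^{o_k}_{S_i, n_{k-1}}(A_{k-1, n_{k-1}})) — i.e. the dynamic-programming (Viterbi) recursion is valid. -/

import Mathlib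

/-!
The last step of an optimal path to `S_i` leaves some state `j`; replacing its prefix by an
optimal path to `j` cannot decrease the final trace, because the sub-TOM entries are weakly
trace-monotone on sub-normalised states. Conversely, extending an optimal path to `j` by the
step `j → S_i` gives a path to `S_i`, so the maximum over `j` is attained. Weak monotonicity
follows from the assumed strict one by shrinking the state with the smaller trace by a factor
`t < 1` and letting `t → 1` (if the larger trace is `0`, both states are `0`).
-/

open Matrix
open scoped ComplexOrder

noncomputable section

def blockMap {n m k : Type*} [Fintype n] [Fintype m]
    (Φ : Matrix n n ℂ →ₗ[ℂ] Matrix m m ℂ)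
    (M : Matrix (n × k) (n × k) ℂ) : Matrix (m × k) (m × k) ℂ :=
  Matrix.of fun p q => Φ (Matrix.of fun a b => M (a, p.2) (b, q.2)) p.1 q.1

/-- A linear map between matrix algebras is completely positive if all its
finite-dimensional ampliations preserve positive semidefiniteness. -/
def IsCP {n m : Type*} [Fintype n] [Fintype m]
    (Φ : Matrix n n ℂ →ₗ[ℂ] Matrix m m ℂ) : Prop :=
  ∀ k : ℕ, ∀ M : Matrix (n × Fin k) (n × Fin k) ℂ, M.PosSemidef →
    (blockMap Φ M).PosSemidef

/-- A quantum state: positive semidefinite with trace one. -/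
def IsState {n : Type*} [Fintype n] (ρ : Matrix n n ℂ) : Prop :=
  ρ.PosSemidef ∧ ρ.trace = 1

/-- A sub-normalised quantum state: positive semidefinite with trace at most one. -/
def IsSubState {n : Type*} [Fintype n] (ρ : Matrix n n ℂ) : Prop :=
  ρ.PosSemidef ∧ ρ.trace ≤ 1

/-- Linear maps on operators over a `d`-dimensional space. -/
abbrev Op (d : ℕ) := Matrix (Fin d) (Fin d) ℂ →ₗ[ℂ] Matrix (Fin d) (Fin d) ℂ

def TraceMonotone {d : ℕ} (Φ : Op d) : Prop :=
  ∀ α β : Matrix (Fin d) (Fin d) ℂ, IsSubState α → IsSubState β →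
    β.trace < α.trace → (Φ β).trace < (Φ α).trace

/-- The sub-normalised state associated with a state path `w = (n_0, …, n_k)`:
`B_w = P^{o_k}_{n_k n_{k-1}} ∘ ⋯ ∘ P^{o_1}_{n_1 n_0}(π_{n_0})`. -/
def Bpath {V : Type*} {N d : ℕ} (P : V → Fin N → Fin N → Op d)
    (o : ℕ → V) (π : Fin N → Matrix (Fin d) (Fin d) ℂ) :
    ℕ → (ℕ → Fin N) → Matrix (Fin d) (Fin d) ℂ
  | 0, w => π (w 0)
  | k + 1, w => P (o (k + 1)) (w (k + 1)) (w k) (Bpath P o π k w)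

open Filter

lemma le_of_forall_mem_Ioo_mul_le {x y : ℝ} (h : ∀ t ∈ Set.Ioo (0 : ℝ) 1, t * x ≤ y) :
    x ≤ y :=
  le_of_tendsto
    (((continuous_mul_const x).tendsto' 1 x (one_mul x)).mono_left nhdsWithin_le_nhds)
    (eventually_of_mem (Ioo_mem_nhdsLT zero_lt_one) h)

lemma Matrix.PosSemidef.trace_im {n : Type*} [Fintype n] {M : Matrix n n ℂ}
    (hM : M.PosSemidef) : M.trace.im = 0 :=
  (Complex.le_def.mp hM.trace_nonneg).2.symm

lemma Matrix.PosSemidef.trace_re_nonneg {n : Type*} [Fintype n] {M : Matrix n n ℂ}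
    (hM : M.PosSemidef) : 0 ≤ M.trace.re :=
  (Complex.le_def.mp hM.trace_nonneg).1

lemma Matrix.PosSemidef.trace_lt_trace_of_re_lt {n : Type*} [Fintype n]
    {M M' : Matrix n n ℂ} (hM : M.PosSemidef) (hM' : M'.PosSemidef)
    (h : M.trace.re < M'.trace.re) : M.trace < M'.trace :=
  Complex.lt_def.mpr ⟨h, by rw [hM.trace_im, hM'.trace_im]⟩

lemma IsSubState.real_smul {n : Type*} [Fintype n] {ρ : Matrix n n ℂ} (hρ : IsSubState ρ)
    {t : ℝ} (ht₀ : 0 ≤ t) (ht₁ : t ≤ 1) : IsSubState ((t : ℂ) • ρ) := by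
  have ht₀' : (0 : ℂ) ≤ t := Complex.zero_le_real.mpr ht₀
  refine ⟨hρ.1.smul ht₀', ?_⟩
  rw [trace_smul, smul_eq_mul]
  exact mul_le_one₀ (mod_cast ht₁) hρ.1.trace_nonneg hρ.2

lemma Matrix.PosSemidef.eq_zero_of_trace_re_eq_zero {n : Type*} [Fintype n]
    {M : Matrix n n ℂ} (hM : M.PosSemidef) (h : M.trace.re = 0) : M = 0 :=
  hM.trace_eq_zero_iff.mp (Complex.ext h hM.trace_im)

lemma TraceMonotone.trace_re_le {d : ℕ} {Φ : Op d} (hΦ : TraceMonotone Φ)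
    {α β : Matrix (Fin d) (Fin d) ℂ} (hα : IsSubState α) (hβ : IsSubState β)
    (h : β.trace.re ≤ α.trace.re) : (Φ β).trace.re ≤ (Φ α).trace.re := by
  rcases hα.1.trace_re_nonneg.eq_or_lt with hα₀ | hα₀
  · have hβ₀ : β.trace.re = 0 := le_antisymm (hα₀ ▸ h) hβ.1.trace_re_nonneg
    rw [hα.1.eq_zero_of_trace_re_eq_zero hα₀.symm, hβ.1.eq_zero_of_trace_re_eq_zero hβ₀]
  refine le_of_forall_mem_Ioo_mul_le fun t ht => ?_
  have htβ := hβ.real_smul ht.1.le ht.2.le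
  have hlt : ((t : ℂ) • β).trace < α.trace := by
    refine htβ.1.trace_lt_trace_of_re_lt hα.1 ?_
    rw [trace_smul, smul_eq_mul, Complex.re_ofReal_mul]
    calc t * β.trace.re ≤ t * α.trace.re := mul_le_mul_of_nonneg_left h ht.1.le
      _ < α.trace.re := mul_lt_of_lt_one_left hα₀ ht.2
  have hΦlt := Complex.lt_def.mp (hΦ α _ hα htβ hlt)
  rw [map_smul, trace_smul, smul_eq_mul, Complex.re_ofReal_mul] at hΦlt
  exact hΦlt.1.le

lemma IsCP.posSemidef_map {n m : Type*} [Fintype n] [Fintype m]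
    {Φ : Matrix n n ℂ →ₗ[ℂ] Matrix m m ℂ} (hΦ : IsCP Φ)
    {ρ : Matrix n n ℂ} (hρ : ρ.PosSemidef) : (Φ ρ).PosSemidef :=
  -- `Φ ρ` is, definitionally, the single diagonal block of the `Fin 1`-ampliation of `Φ`
  (hΦ 1 _ (hρ.submatrix Prod.fst)).submatrix fun a : m => ((a, 0) : m × Fin 1)

lemma IsCP.isSubState_map {n m : Type*} [Fintype n] [Fintype m]
    {Φ : Matrix n n ℂ →ₗ[ℂ] Matrix m m ℂ} (hΦ : IsCP Φ)
    (hΦtr : ∀ ρ, IsSubState ρ → (Φ ρ).trace ≤ ρ.trace)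
    {ρ : Matrix n n ℂ} (hρ : IsSubState ρ) : IsSubState (Φ ρ) :=
  ⟨hΦ.posSemidef_map hρ.1, (hΦtr ρ hρ).trans hρ.2⟩

section Bpath

variable {V : Type*} {N d : ℕ} {P : V → Fin N → Fin N → Op d} {o : ℕ → V}
  {π : Fin N → Matrix (Fin d) (Fin d) ℂ}

lemma Bpath_congr {k : ℕ} {w w' : ℕ → Fin N} (h : ∀ t ≤ k, w t = w' t) :
    Bpath P o π k w = Bpath P o π k w' := by
  induction k with
  | zero => simp only [Bpath, h 0 le_rfl]
  | succ k ih =>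
    simp only [Bpath]
    rw [h (k + 1) le_rfl, h k k.le_succ, ih fun t ht => h t (ht.trans k.le_succ)]

lemma Bpath_succ_update (k : ℕ) (w : ℕ → Fin N) (i : Fin N) :
    Bpath P o π (k + 1) (Function.update w (k + 1) i) =
      P (o (k + 1)) i (w k) (Bpath P o π k w) := by
  rw [Bpath, Function.update_self, Function.update_of_ne (by omega),
    Bpath_congr fun t ht => Function.update_of_ne (show t ≠ k + 1 by omega) i w]

lemma isSubState_Bpath (hP : ∀ v i j ρ, IsSubState ρ → IsSubState (P v i j ρ))
    (hπ : ∀ i, IsSubState (π i)) (k : ℕ) (w : ℕ → Fin N) :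
    IsSubState (Bpath P o π k w) := by
  induction k with
  | zero => exact hπ (w 0)
  | succ k ih => exact hP _ _ _ _ ih

end Bpath

/-- The Viterbi dynamic-programming recursion is valid for a Mealy QHMM whose
sub-TOM entries are trace-monotonicity preserving quantum operations. -/
theorem viterbi_recursion {V : Type*} {N d : ℕ} [Nonempty (Fin N)]
    (P : V → Fin N → Fin N → Op d)
    (hCP : ∀ v i j, IsCP (P v i j))
    (hTNI : ∀ v i j ρ, IsSubState ρ → (P v i j ρ).trace ≤ ρ.trace)
    (hTM : ∀ v i j, TraceMonotone (P v i j))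
    (π : Fin N → Matrix (Fin d) (Fin d) ℂ) (hπ : ∀ i, IsSubState (π i))
    (o : ℕ → V)
    (A : ℕ → Fin N → Matrix (Fin d) (Fin d) ℂ)
    (hA : ∀ k i, (∃ w : ℕ → Fin N, w k = i ∧ A k i = Bpath P o π k w) ∧
      ∀ w : ℕ → Fin N, w k = i → (Bpath P o π k w).trace.re ≤ (A k i).trace.re)
    (k : ℕ) (hk : 1 ≤ k) (i : Fin N) :
    (A k i).trace.re =
      Finset.univ.sup' Finset.univ_nonempty
        (fun j => (P (o k) i j (A (k - 1) j)).trace.re) := by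
  obtain ⟨m, rfl⟩ : ∃ m, k = m + 1 := ⟨k - 1, by omega⟩
  rw [Nat.add_sub_cancel]
  have hB : ∀ k w, IsSubState (Bpath P o π k w) :=
    isSubState_Bpath (fun v i j _ => (hCP v i j).isSubState_map (hTNI v i j)) hπ
  have hAsub : ∀ k j, IsSubState (A k j) := fun k j => by
    obtain ⟨w, -, hAw⟩ := (hA k j).1
    exact hAw ▸ hB k w
  apply le_antisymm
  · obtain ⟨w, hwi, hAw⟩ := (hA (m + 1) i).1
    have hA_eq : A (m + 1) i = P (o (m + 1)) i (w m) (Bpath P o π m w) := by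
      rw [hAw, Bpath, hwi]
    rw [hA_eq]
    exact ((hTM _ _ _).trace_re_le (hAsub m (w m)) (hB m w) ((hA m (w m)).2 w rfl)).trans
      (Finset.le_sup' (fun j => (P (o (m + 1)) i j (A m j)).trace.re) (Finset.mem_univ _))
  · refine Finset.sup'_le _ _ fun j _ => ?_
    obtain ⟨w, hwj, hAw⟩ := (hA m j).1
    have h := (hA (m + 1) i).2 (Function.update w (m + 1) i) (Function.update_self ..)
    rwa [Bpath_succ_update, hwj, ← hAw] at h
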